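/- arXiv:2305.04698 — 2 statements merged into one kernel-verified Lean document; each statement's English description precedes it below -/
import Mathlib

section
/- Let p be a prime, m ≥ 1 and 1 ≤ s ≤ m integers, λ a positive integer with p ∣ λ, and π a permutation of {s, s+1, …, m}. Fix g_1, …, g_m, g ∈ ℤ_λ and an arbitrary function h : ℤ_p^{s−1} → ℤ_λ (with h = 0 when s = 1). Define f : ℤ_p^m → ℤ_λ by f(v_1, …, v_m) = (λ/p)·Σ_{i=s}^{m−1} v_{π(i)} v_{π(i+1)} + Σ_{i=1}^{m} g_i v_i + g + h(v_1, …, v_{s−1}) (mod λ), and for each γ ∈ ℤ_p define a^γ = f + (λ/p)·v_{π(s)}·γ (mod λ). Then for every integer τ with p^{s−1} < τ < p^m, Σ_{γ=0}^{p−1} ρ(ψ(a^γ))(τ) = 0; that is, the set {ψ(a^γ) : γ ∈ ℤ_p} is a type-II (p, p^m, p^m − p^{s−1})-Z-complementary set. -/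
/-!
Sum over `γ` first: `∑_γ ω_p^{γ (u_{π(s)} - w_{π(s)})}` kills every pair `(i, i + τ)` whose digits
at `π(s)` differ and multiplies the others by `p`. For a surviving pair, `τ > p^(s-1)` forces a
difference at some position of the path `π(s), …, π(m)`; let `π(c+1)` be the first one. Adding `1`
to the common digit of `i` and `i + τ` at `π(c)` permutes the surviving pairs, keeps `c`, and
multiplies the summand by `ω_p^{u_{π(c+1)} - w_{π(c+1)}} ≠ 1`, which comes from the quadratic term
`v_{π(c)} v_{π(c+1)}`; the linear terms and `h` see the same change at `i` and at `i + τ`. Hence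
the sum over the surviving pairs vanishes.
-/

open Finset

/-- `eZMod q x = ω_q^x` where `ω_q = exp(2π√-1/q)`. -/
noncomputable def eZMod (q : ℕ) (x : ZMod q) : ℂ :=
  Complex.exp (2 * (Real.pi : ℂ) * Complex.I * (x.val : ℂ) / (q : ℂ))

/-- Aperiodic autocorrelation of a sequence of length `L` at shift `τ`. -/
noncomputable def aacf (L : ℕ) (a : ℕ → ℂ) (τ : ℕ) : ℂ :=
  ∑ i ∈ Finset.range (L - τ), a i * (starRingEnd ℂ) (a (i + τ))

/-- `dig p i k` is the `k`-th base-`p` digit (1-indexed) of `i`, viewed in `ℤ_p`. -/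
def dig (p i : ℕ) (k : ℕ) : ZMod p :=
  (((i / p ^ (k - 1)) % p : ℕ) : ZMod p)

lemma Finset.sum_eq_zero_of_map_eq_mul {α K : Type*} [CommRing K] [IsDomain K] {S : Finset α}
    {σ : α → α} (hσ : Set.MapsTo σ S S) (hinj : Set.InjOn σ S) {F w : α → K}
    (hw : ∀ i ∈ S, w (σ i) = w i) (hw1 : ∀ i ∈ S, w i ≠ 1) (hF : ∀ i ∈ S, F (σ i) = w i * F i) :
    ∑ i ∈ S, F i = 0 := by
  classical
  rw [← sum_fiberwise_of_maps_to (g := w) (t := S.image w) fun i hi => mem_image_of_mem w hi]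
  refine sum_eq_zero fun c hc => ?_
  obtain ⟨i₀, hi₀, rfl⟩ := mem_image.1 hc
  set T := S.filter fun i => w i = w i₀
  have hTS : T ⊆ S := filter_subset _ _
  have hσT : Set.MapsTo σ T T := fun i hi => by
    obtain ⟨hiS, hwi⟩ := mem_filter.1 hi
    exact mem_filter.2 ⟨hσ hiS, (hw i hiS).trans hwi⟩
  have himage : T.image σ = T :=
    eq_of_subset_of_card_le (image_subset_iff.2 hσT) (card_image_of_injOn (hinj.mono hTS)).ge
  have hfix : ∑ i ∈ T, F i = w i₀ * ∑ i ∈ T, F i := calc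
    ∑ i ∈ T, F i = ∑ i ∈ T.image σ, F i := by rw [himage]
    _ = ∑ i ∈ T, F (σ i) := sum_image (hinj.mono hTS)
    _ = ∑ i ∈ T, w i₀ * F i := sum_congr rfl fun i hi => by
      rw [hF i (hTS hi), (mem_filter.1 hi).2]
    _ = w i₀ * ∑ i ∈ T, F i := (mul_sum _ _ _).symm
  have hne : 1 - w i₀ ≠ 0 := sub_ne_zero.2 (hw1 i₀ hi₀).symm
  exact (mul_eq_zero.1 (by linear_combination hfix : (1 - w i₀) * ∑ i ∈ T, F i = 0)).resolve_left
    hne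

section Character

open ZMod

lemma eZMod_eq_stdAddChar {q : ℕ} [NeZero q] (x : ZMod q) : eZMod q x = stdAddChar x := by
  rw [stdAddChar_apply, toCircle_apply]; rfl

lemma conj_stdAddChar {q : ℕ} [NeZero q] (x : ZMod q) :
    (starRingEnd ℂ) (stdAddChar x) = stdAddChar (-x) := by
  rw [AddChar.map_neg_eq_inv, stdAddChar_apply, ← Circle.coe_inv_eq_conj, Circle.coe_inv]

lemma stdAddChar_natCast_div_mul {p q : ℕ} [NeZero p] [NeZero q] (hpq : p ∣ q) (n : ℕ) :
    stdAddChar (((q / p : ℕ) : ZMod q) * (n : ZMod q)) = stdAddChar (n : ZMod p) := by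
  have hp : (p : ℂ) ≠ 0 := NeZero.ne _
  have hq : (q : ℂ) ≠ 0 := NeZero.ne _
  rw [← Nat.cast_mul, stdAddChar_apply, stdAddChar_apply, toCircle_natCast, toCircle_natCast,
    Nat.cast_mul, Nat.cast_div hpq hp]
  congr 1
  field_simp

lemma sum_range_stdAddChar_natCast_mul {p : ℕ} [NeZero p] (d : ZMod p) :
    ∑ γ ∈ range p, stdAddChar (N := p) ((γ : ZMod p) * d) = if d = 0 then (p : ℂ) else 0 := by
  simp_rw [← nsmul_eq_mul, AddChar.map_nsmul_eq_pow]
  split_ifs with hd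
  · simp [hd]
  · have hne : stdAddChar d ≠ 1 := by
      rwa [← AddChar.map_zero_eq_one (stdAddChar (N := p)), injective_stdAddChar.ne_iff]
    rw [geom_sum_eq hne, ← AddChar.map_nsmul_eq_pow, nsmul_eq_mul, ZMod.natCast_self, zero_mul,
      AddChar.map_zero_eq_one, sub_self, zero_div]

end Character

section PathForm

variable {R : Type*} [CommRing R]

def pathForm (s m : ℕ) (a : ℕ → R) : R := ∑ l ∈ Ico s m, a l * a (l + 1)

lemma pathForm_sub_pathForm_of_eq_off {s m c : ℕ} (hc : c ∈ Ico s m) {a b a' b' : ℕ → R}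
    (ha' : ∀ l ∈ Icc s m, l ≠ c → a' l = a l) (hb' : ∀ l ∈ Icc s m, l ≠ c → b' l = b l)
    (hc_eq : a c = b c) (hc_eq' : a' c = b' c) (hbefore : ∀ l ∈ Ico s c, a l = b l) :
    pathForm s m a' - pathForm s m b' =
      pathForm s m a - pathForm s m b + (a' c - a c) * (a (c + 1) - b (c + 1)) := by
  rw [mem_Ico] at hc
  have hterm : ∀ l ∈ Ico s m, (a' l * a' (l + 1) - b' l * b' (l + 1)) -
      (a l * a (l + 1) - b l * b (l + 1)) =
        if l = c then (a' c - a c) * (a (c + 1) - b (c + 1)) else 0 := by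
    intro l hl
    rw [mem_Ico] at hl
    have hl' : l ∈ Icc s m := mem_Icc.2 ⟨hl.1, hl.2.le⟩
    have hl1 : l + 1 ∈ Icc s m := mem_Icc.2 ⟨by omega, hl.2⟩
    split_ifs with hlc
    · subst hlc
      rw [ha' _ hl1 (by omega), hb' _ hl1 (by omega), ← hc_eq', hc_eq]
      ring
    · rw [ha' l hl' hlc, hb' l hl' hlc]
      by_cases hl1c : l + 1 = c
      · rw [hl1c, hbefore l (mem_Ico.2 ⟨hl.1, by omega⟩), hc_eq', hc_eq]
        ring
      · rw [ha' _ hl1 hl1c, hb' _ hl1 hl1c]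
        ring
  have := sum_congr rfl hterm
  rw [sum_ite_eq', if_pos (mem_Ico.2 hc), sum_sub_distrib, sum_sub_distrib, sum_sub_distrib]
    at this
  rw [pathForm, pathForm, pathForm, pathForm]
  linear_combination this

end PathForm

section Bump

variable {p : ℕ}

structure IsBump (k : ℕ) (u w u' w' : ℕ → ZMod p) : Prop where
  eq_at : u k = w k
  fst_at : u' k = u k + 1
  snd_at : w' k = w k + 1
  fst_of_ne : ∀ t, 1 ≤ t → t ≠ k → u' t = u t
  snd_of_ne : ∀ t, 1 ≤ t → t ≠ k → w' t = w t

lemma IsBump.fst_eq_snd_at {k : ℕ} {u w u' w' : ℕ → ZMod p} (hb : IsBump k u w u' w') :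
    u' k = w' k := by
  rw [hb.fst_at, hb.snd_at, hb.eq_at]

def AgreeUntil (s : ℕ) (π : Equiv.Perm ℕ) (u w : ℕ → ZMod p) (c : ℕ) : Prop :=
  s ≤ c ∧ (∀ l ∈ Icc s c, u (π l) = w (π l)) ∧ u (π (c + 1)) ≠ w (π (c + 1))

lemma AgreeUntil.unique {s c c' : ℕ} {π : Equiv.Perm ℕ} {u w : ℕ → ZMod p}
    (h : AgreeUntil s π u w c) (h' : AgreeUntil s π u w c') : c = c' := by
  have := h.1
  have := h'.1
  by_contra hne
  rcases lt_or_gt_of_ne hne with hlt | hlt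
  · exact h.2.2 (h'.2.1 _ (mem_Icc.2 ⟨by omega, hlt⟩))
  · exact h'.2.2 (h.2.1 _ (mem_Icc.2 ⟨by omega, hlt⟩))

lemma one_le_of_mapsTo_Icc {s m l : ℕ} {π : Equiv.Perm ℕ} (hs : 1 ≤ s)
    (hπ : ∀ i ∈ Icc s m, π i ∈ Icc s m) (hl : l ∈ Icc s m) : 1 ≤ π l :=
  hs.trans (mem_Icc.1 (hπ l hl)).1

lemma AgreeUntil.of_isBump {s m c : ℕ} {π : Equiv.Perm ℕ} (hs : 1 ≤ s)
    (hπ : ∀ i ∈ Icc s m, π i ∈ Icc s m) (hcm : c < m) {u w u' w' : ℕ → ZMod p}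
    (hb : IsBump (π c) u w u' w') (h : AgreeUntil s π u w c) : AgreeUntil s π u' w' c := by
  obtain ⟨hsc, hagree, hdiff⟩ := h
  have hne : π (c + 1) ≠ π c := by simp
  have h1 : 1 ≤ π (c + 1) := one_le_of_mapsTo_Icc hs hπ (mem_Icc.2 ⟨by omega, hcm⟩)
  refine ⟨hsc, fun l hl => ?_, ?_⟩
  · rcases eq_or_ne l c with rfl | hlc
    · exact hb.fst_eq_snd_at
    · have hl1 : 1 ≤ π l := one_le_of_mapsTo_Icc hs hπ (mem_Icc.2 ⟨(mem_Icc.1 hl).1, by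
        have := (mem_Icc.1 hl).2; omega⟩)
      have hπne : π l ≠ π c := π.injective.ne hlc
      rw [hb.fst_of_ne _ hl1 hπne, hb.snd_of_ne _ hl1 hπne]
      exact hagree l hl
  · rwa [hb.fst_of_ne _ h1 hne, hb.snd_of_ne _ h1 hne]

end Bump

section Digits

variable {p : ℕ}

lemma dig_val [NeZero p] (i t : ℕ) : (dig p i t).val = i / p ^ (t - 1) % p :=
  ZMod.val_natCast_of_lt (Nat.mod_lt _ (NeZero.pos p))

lemma dig_eq_of_mod_eq {n i e t : ℕ} (h : n % p ^ e = i % p ^ e) (ht : t - 1 < e) :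
    dig p n t = dig p i t := by
  have hdvd : p ^ (t - 1) * p ∣ p ^ e := by
    rw [← pow_succ]; exact pow_dvd_pow p (by omega)
  simp only [dig]
  rw [← Nat.mod_mul_right_div_self, ← Nat.mod_mul_right_div_self, ← Nat.mod_mod_of_dvd n hdvd,
    ← Nat.mod_mod_of_dvd i hdvd, h]

lemma dig_eq_of_div_eq {n i e t : ℕ} (h : n / p ^ e = i / p ^ e) (ht : e < t) :
    dig p n t = dig p i t := by
  have hpow : p ^ (t - 1) = p ^ e * p ^ (t - 1 - e) := by rw [← pow_add]; congr 1; omega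
  simp only [dig, hpow, ← Nat.div_div_eq_div_mul, h]

/-- Replaces the `(e+1)`-th digit of `i`, in the 1-indexed numbering of `dig`, by `x < p`. -/
def setDigit (p e i x : ℕ) : ℕ := i % p ^ e + p ^ e * (x + p * (i / p ^ (e + 1)))

lemma setDigit_mod (e i x : ℕ) : setDigit p e i x % p ^ e = i % p ^ e := by
  rw [setDigit, Nat.add_mul_mod_self_left, Nat.mod_mod]

lemma setDigit_div_pow [NeZero p] (e i x : ℕ) :
    setDigit p e i x / p ^ e = x + p * (i / p ^ (e + 1)) := by
  have hpos : 0 < p ^ e := pow_pos (NeZero.pos p) e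
  rw [setDigit, Nat.add_mul_div_left _ _ hpos, Nat.div_eq_of_lt (Nat.mod_lt _ hpos), zero_add]

lemma setDigit_div_pow_succ [NeZero p] (e i : ℕ) {x : ℕ} (hx : x < p) :
    setDigit p e i x / p ^ (e + 1) = i / p ^ (e + 1) := by
  rw [pow_succ, ← Nat.div_div_eq_div_mul, setDigit_div_pow, Nat.add_mul_div_left _ _
    (NeZero.pos p), Nat.div_eq_of_lt hx, zero_add, pow_succ]

lemma setDigit_add_mul [NeZero p] (e i x : ℕ) :
    setDigit p e i x + p ^ e * (dig p i (e + 1)).val = i + p ^ e * x := by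
  rw [dig_val, Nat.add_sub_cancel]
  have h1 := Nat.mod_add_div i (p ^ e)
  have h2 := Nat.mod_add_div (i / p ^ e) p
  rw [Nat.div_div_eq_div_mul, ← pow_succ] at h2
  rw [setDigit]
  conv_rhs => rw [← h1, ← h2]
  ring

lemma dig_setDigit_self [NeZero p] (e i : ℕ) {x : ℕ} (hx : x < p) :
    dig p (setDigit p e i x) (e + 1) = x := by
  simp only [dig, Nat.add_sub_cancel, setDigit_div_pow, Nat.add_mul_mod_self_left,
    Nat.mod_eq_of_lt hx]

lemma dig_setDigit_of_ne [NeZero p] (e i : ℕ) {x t : ℕ} (hx : x < p) (ht : 1 ≤ t)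
    (hte : t ≠ e + 1) : dig p (setDigit p e i x) t = dig p i t := by
  rcases lt_or_gt_of_ne hte with hlt | hgt
  · exact dig_eq_of_mod_eq (setDigit_mod e i x) (by omega)
  · exact dig_eq_of_div_eq (setDigit_div_pow_succ e i hx) hgt

lemma setDigit_lt_pow [NeZero p] {e m i x : ℕ} (hem : e < m) (hi : i < p ^ m) (hx : x < p) :
    setDigit p e i x < p ^ m := by
  have hpos : 0 < p ^ (e + 1) := pow_pos (NeZero.pos p) _
  have hm : p ^ m = p ^ (m - (e + 1)) * p ^ (e + 1) := by rw [← pow_add]; congr 1; omega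
  rw [hm, ← Nat.div_lt_iff_lt_mul hpos, setDigit_div_pow_succ e i hx, Nat.div_lt_iff_lt_mul hpos,
    ← hm]
  exact hi

lemma setDigit_add_right [NeZero p] {e i τ : ℕ} (h : dig p i (e + 1) = dig p (i + τ) (e + 1))
    (x : ℕ) : setDigit p e (i + τ) x = setDigit p e i x + τ := by
  have h1 := setDigit_add_mul (p := p) e i x
  have h2 := setDigit_add_mul (p := p) e (i + τ) x
  rw [← h] at h2
  omega

lemma eq_of_setDigit_eq [NeZero p] {e i i' x : ℕ} (h : setDigit p e i x = setDigit p e i' x)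
    (hd : dig p i (e + 1) = dig p i' (e + 1)) : i = i' := by
  have h1 := setDigit_add_mul (p := p) e i x
  have h2 := setDigit_add_mul (p := p) e i' x
  rw [h, hd] at h1
  omega

lemma div_pow_eq_of_dig_eq [NeZero p] {e m i j : ℕ} (hi : i < p ^ m) (hj : j < p ^ m)
    (h : ∀ t, e < t → t ≤ m → dig p i t = dig p j t) : i / p ^ e = j / p ^ e := by
  have hmod : ∀ n, (∀ t, e < t → t ≤ e + n → dig p i t = dig p j t) →
      i / p ^ e % p ^ n = j / p ^ e % p ^ n := by
    intro n
    induction n with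
    | zero => simp [Nat.mod_one]
    | succ n ih =>
      intro hd
      have hv := congrArg ZMod.val (hd (e + n + 1) (by omega) le_rfl)
      simp only [dig_val, Nat.add_sub_cancel, pow_add, ← Nat.div_div_eq_div_mul] at hv
      rw [Nat.mod_pow_succ, Nat.mod_pow_succ, ih fun t h1 h2 => hd t h1 (by omega), hv]
  have hle : p ^ m ≤ p ^ e * p ^ (m - e) := by
    rw [← pow_add]; exact Nat.pow_le_pow_right (NeZero.pos p) (by omega)
  have hlt : ∀ k < p ^ m, k / p ^ e < p ^ (m - e) := fun k hk =>
    Nat.div_lt_of_lt_mul (hk.trans_le hle)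
  rw [← Nat.mod_eq_of_lt (hlt i hi), ← Nat.mod_eq_of_lt (hlt j hj)]
  exact hmod _ fun t h1 h2 => h t h1 (by omega)

def bumpAt (p k i : ℕ) : ℕ := setDigit p (k - 1) i (dig p i k + 1).val

lemma dig_bumpAt_self [NeZero p] {k : ℕ} (hk : 1 ≤ k) (i : ℕ) :
    dig p (bumpAt p k i) k = dig p i k + 1 := by
  obtain ⟨e, rfl⟩ := Nat.exists_eq_add_of_le' hk
  rw [bumpAt, Nat.add_sub_cancel, dig_setDigit_self e i (ZMod.val_lt _), ZMod.natCast_zmod_val]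

lemma dig_bumpAt_of_ne [NeZero p] {k t : ℕ} (hk : 1 ≤ k) (i : ℕ) (ht : 1 ≤ t) (htk : t ≠ k) :
    dig p (bumpAt p k i) t = dig p i t := by
  obtain ⟨e, rfl⟩ := Nat.exists_eq_add_of_le' hk
  exact dig_setDigit_of_ne e i (ZMod.val_lt _) ht htk

lemma bumpAt_add_right [NeZero p] {k i τ : ℕ} (hk : 1 ≤ k) (h : dig p i k = dig p (i + τ) k) :
    bumpAt p k (i + τ) = bumpAt p k i + τ := by
  obtain ⟨e, rfl⟩ := Nat.exists_eq_add_of_le' hk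
  rw [bumpAt, bumpAt, ← h]
  exact setDigit_add_right h _

lemma bumpAt_lt_pow [NeZero p] {k m i : ℕ} (hk : 1 ≤ k) (hkm : k ≤ m) (hi : i < p ^ m) :
    bumpAt p k i < p ^ m := by
  rw [bumpAt]
  exact setDigit_lt_pow (by omega) hi (ZMod.val_lt _)

lemma bumpAt_injective [NeZero p] {k : ℕ} (hk : 1 ≤ k) : Function.Injective (bumpAt p k) := by
  intro i i' hii'
  obtain ⟨e, rfl⟩ := Nat.exists_eq_add_of_le' hk
  have hd : dig p i (e + 1) = dig p i' (e + 1) := by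
    have h := dig_bumpAt_self (p := p) hk i
    rw [hii', dig_bumpAt_self hk] at h
    exact (add_left_inj 1).1 h.symm
  rw [bumpAt, bumpAt, hd] at hii'
  exact eq_of_setDigit_eq hii' hd

lemma isBump_dig_bumpAt [NeZero p] {k i τ : ℕ} (hk : 1 ≤ k) (h : dig p i k = dig p (i + τ) k) :
    IsBump k (dig p i) (dig p (i + τ)) (dig p (bumpAt p k i)) (dig p (bumpAt p k i + τ)) := by
  rw [← bumpAt_add_right hk h]
  exact ⟨h, dig_bumpAt_self hk i, dig_bumpAt_self hk _,
    fun t ht htk => dig_bumpAt_of_ne hk i ht htk, fun t ht htk => dig_bumpAt_of_ne hk _ ht htk⟩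

end Digits

lemma exists_agreeUntil {p s m τ i : ℕ} [NeZero p] {π : Equiv.Perm ℕ}
    (hπ : ∀ l ∈ Icc s m, π l ∈ Icc s m) (hτ : p ^ (s - 1) < τ) (hi : i + τ < p ^ m)
    (hstart : dig p i (π s) = dig p (i + τ) (π s)) :
    ∃ c < m, AgreeUntil s π (dig p i) (dig p (i + τ)) c := by
  classical
  have hex : ∃ l, s ≤ l ∧ l ≤ m ∧ dig p i (π l) ≠ dig p (i + τ) (π l) := by
    by_contra! hall
    have hsurj : Set.SurjOn π (Icc s m) (Icc s m) :=
      surjOn_of_injOn_of_card_le π hπ π.injective.injOn le_rfl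
    have hdiv := div_pow_eq_of_dig_eq (e := s - 1) (i := i) (by omega) hi fun t ht htm => by
      obtain ⟨l, hl, rfl⟩ := hsurj (mem_Icc.2 ⟨by omega, htm⟩)
      exact hall l (mem_Icc.1 hl).1 (mem_Icc.1 hl).2
    have h1 := Nat.div_add_mod i (p ^ (s - 1))
    have h2 := Nat.div_add_mod (i + τ) (p ^ (s - 1))
    have h3 := Nat.mod_lt (i + τ) (pow_pos (NeZero.pos p) (s - 1))
    rw [← hdiv] at h2
    generalize i % p ^ (s - 1) = r at h1
    omega
  have hspec := Nat.find_spec hex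
  have hfs : s < Nat.find hex := lt_of_le_of_ne hspec.1 fun h => hspec.2.2 (h ▸ hstart)
  have hfm : Nat.find hex ≤ m := hspec.2.1
  refine ⟨Nat.find hex - 1, by omega, by omega, fun l hl => ?_, ?_⟩
  · obtain ⟨hsl, hlc⟩ := mem_Icc.1 hl
    by_contra hne
    exact Nat.find_min hex (show l < Nat.find hex by omega) ⟨hsl, by omega, hne⟩
  · rw [Nat.sub_add_cancel (by omega)]
    exact hspec.2.2

lemma sum_range_stdAddChar_mul_conj {p lam k : ℕ} [NeZero p] [NeZero lam] (hpl : p ∣ lam)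
    {f : (ℕ → ZMod p) → ZMod lam} {a : ZMod p → (ℕ → ZMod p) → ZMod lam}
    (ha : ∀ (γ : ZMod p) (v : ℕ → ZMod p),
      a γ v = f v + ((lam / p : ℕ) : ZMod lam) * ((v k).val : ZMod lam) * (γ.val : ZMod lam))
    (u w : ℕ → ZMod p) :
    ∑ γ ∈ range p, ZMod.stdAddChar (a γ u) * (starRingEnd ℂ) (ZMod.stdAddChar (a γ w)) =
      if u k = w k then
        p * (ZMod.stdAddChar (f u) * (starRingEnd ℂ) (ZMod.stdAddChar (f w)))
      else 0 := by
  have hmod : ∀ (γ : ZMod p) v, ZMod.stdAddChar (a γ v) =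
      ZMod.stdAddChar (f v) * ZMod.stdAddChar (γ * v k) := by
    intro γ v
    rw [ha, AddChar.map_add_eq_mul, mul_assoc, ← Nat.cast_mul,
      stdAddChar_natCast_div_mul hpl]
    push_cast [ZMod.natCast_zmod_val]
    rw [mul_comm γ]
  have hterm : ∀ γ : ℕ, ZMod.stdAddChar (a γ u) * (starRingEnd ℂ) (ZMod.stdAddChar (a γ w)) =
      ZMod.stdAddChar (f u) * (starRingEnd ℂ) (ZMod.stdAddChar (f w)) *
        ZMod.stdAddChar ((γ : ZMod p) * (u k - w k)) := by
    intro γ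
    rw [hmod, hmod, map_mul (starRingEnd ℂ), conj_stdAddChar, conj_stdAddChar, mul_sub,
      sub_eq_add_neg, AddChar.map_add_eq_mul]
    ring
  rw [sum_congr rfl fun γ _ => hterm γ, ← mul_sum, sum_range_stdAddChar_natCast_mul]
  simp only [sub_eq_zero]
  split_ifs <;> ring

section Phase

open ZMod

variable {p lam s m : ℕ} [NeZero p] [NeZero lam] {π : Equiv.Perm ℕ} {g : ℕ → ZMod lam}
  {g₀ : ZMod lam} {h : (ℕ → ZMod p) → ZMod lam} {f : (ℕ → ZMod p) → ZMod lam}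

lemma stdAddChar_eq_pathForm_mul (hpl : p ∣ lam)
    (hf : ∀ v : ℕ → ZMod p,
      f v = ((lam / p : ℕ) : ZMod lam) *
            (∑ i ∈ Finset.Ico s m, ((v (π i)).val : ZMod lam) * ((v (π (i + 1))).val : ZMod lam))
        + ∑ i ∈ Finset.Icc 1 m, g i * ((v i).val : ZMod lam) + g₀ + h v)
    (v : ℕ → ZMod p) :
    stdAddChar (f v) = stdAddChar (pathForm s m fun l => v (π l)) *
      stdAddChar (∑ i ∈ Icc 1 m, g i * ((v i).val : ZMod lam) + g₀ + h v) := by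
  have hcast : (∑ i ∈ Ico s m, ((v (π i)).val : ZMod lam) * ((v (π (i + 1))).val : ZMod lam)) =
      ((∑ i ∈ Ico s m, (v (π i)).val * (v (π (i + 1))).val : ℕ) : ZMod lam) := by
    push_cast; rfl
  rw [hf, add_assoc, add_assoc, AddChar.map_add_eq_mul, hcast, stdAddChar_natCast_div_mul hpl]
  push_cast [natCast_zmod_val]
  simp only [pathForm, add_assoc]

lemma stdAddChar_mul_conj_of_isBump (hs : 1 ≤ s) (hpl : p ∣ lam)
    (hπ : ∀ i ∈ Icc s m, π i ∈ Icc s m)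
    (hdep : ∀ u w : ℕ → ZMod p, (∀ t, 1 ≤ t → t ≤ s - 1 → u t = w t) → h u = h w)
    (hf : ∀ v : ℕ → ZMod p,
      f v = ((lam / p : ℕ) : ZMod lam) *
            (∑ i ∈ Finset.Ico s m, ((v (π i)).val : ZMod lam) * ((v (π (i + 1))).val : ZMod lam))
        + ∑ i ∈ Finset.Icc 1 m, g i * ((v i).val : ZMod lam) + g₀ + h v)
    {c : ℕ} (hc : c ∈ Ico s m) {u w u' w' : ℕ → ZMod p} (hb : IsBump (π c) u w u' w')
    (hbefore : ∀ l ∈ Ico s c, u (π l) = w (π l)) :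
    stdAddChar (f u') * (starRingEnd ℂ) (stdAddChar (f w')) =
      stdAddChar (u (π (c + 1)) - w (π (c + 1))) *
        (stdAddChar (f u) * (starRingEnd ℂ) (stdAddChar (f w))) := by
  set B : (ℕ → ZMod p) → ZMod lam := fun v => ∑ i ∈ Icc 1 m, g i * ((v i).val : ZMod lam) + g₀ + h v
  have hphase : ∀ v v' : ℕ → ZMod p, stdAddChar (f v) * (starRingEnd ℂ) (stdAddChar (f v')) =
      stdAddChar ((pathForm s m fun l => v (π l)) - pathForm s m fun l => v' (π l)) *
        stdAddChar (B v - B v') := by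
    intro v v'
    rw [stdAddChar_eq_pathForm_mul hpl hf, stdAddChar_eq_pathForm_mul hpl hf, map_mul,
      conj_stdAddChar, conj_stdAddChar, AddChar.map_neg_eq_inv, AddChar.map_neg_eq_inv,
      AddChar.map_sub_eq_div, AddChar.map_sub_eq_div]
    ring
  have hcm : c ∈ Icc s m := mem_Icc.2 ⟨(mem_Ico.1 hc).1, (mem_Ico.1 hc).2.le⟩
  have hk : s ≤ π c := (mem_Icc.1 (hπ c hcm)).1
  have hoff : ∀ l ∈ Icc s m, l ≠ c → 1 ≤ π l ∧ π l ≠ π c := fun l hl hlc =>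
    ⟨one_le_of_mapsTo_Icc hs hπ hl, π.injective.ne hlc⟩
  have hpath := pathForm_sub_pathForm_of_eq_off hc (a := fun l => u (π l))
    (b := fun l => w (π l)) (a' := fun l => u' (π l)) (b' := fun l => w' (π l))
    (fun l hl hlc => hb.fst_of_ne _ (hoff l hl hlc).1 (hoff l hl hlc).2)
    (fun l hl hlc => hb.snd_of_ne _ (hoff l hl hlc).1 (hoff l hl hlc).2)
    hb.eq_at hb.fst_eq_snd_at hbefore
  have hB : B u' - B w' = B u - B w := by
    have hh : ∀ v v' : ℕ → ZMod p, (∀ t, 1 ≤ t → t ≠ π c → v' t = v t) → h v' = h v :=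
      fun v v' hvv' => hdep _ _ fun t ht1 hts => hvv' t ht1 (by omega)
    have hlin : ∑ i ∈ Icc 1 m, g i * ((u' i).val : ZMod lam) -
        ∑ i ∈ Icc 1 m, g i * ((w' i).val : ZMod lam) =
        ∑ i ∈ Icc 1 m, g i * ((u i).val : ZMod lam) -
          ∑ i ∈ Icc 1 m, g i * ((w i).val : ZMod lam) := by
      rw [← sum_sub_distrib, ← sum_sub_distrib]
      refine sum_congr rfl fun t ht => ?_
      rcases eq_or_ne t (π c) with rfl | htk
      · rw [hb.fst_eq_snd_at, hb.eq_at, sub_self, sub_self]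
      · have ht1 := (mem_Icc.1 ht).1
        rw [hb.fst_of_ne t ht1 htk, hb.snd_of_ne t ht1 htk]
    simp only [B]
    rw [hh u u' hb.fst_of_ne, hh w w' hb.snd_of_ne]
    linear_combination hlin
  rw [hphase, hphase, hpath, hB, hb.fst_at, add_sub_cancel_left, one_mul, AddChar.map_add_eq_mul]
  ring

lemma sum_filter_stdAddChar_mul_conj_eq_zero (hs : 1 ≤ s) (hpl : p ∣ lam)
    (hπ : ∀ i ∈ Icc s m, π i ∈ Icc s m)
    (hdep : ∀ u w : ℕ → ZMod p, (∀ t, 1 ≤ t → t ≤ s - 1 → u t = w t) → h u = h w)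
    (hf : ∀ v : ℕ → ZMod p,
      f v = ((lam / p : ℕ) : ZMod lam) *
            (∑ i ∈ Finset.Ico s m, ((v (π i)).val : ZMod lam) * ((v (π (i + 1))).val : ZMod lam))
        + ∑ i ∈ Finset.Icc 1 m, g i * ((v i).val : ZMod lam) + g₀ + h v)
    {τ : ℕ} (hτ : p ^ (s - 1) < τ) :
    ∑ i ∈ (range (p ^ m - τ)).filter (fun i => dig p i (π s) = dig p (i + τ) (π s)),
      stdAddChar (f (dig p i)) * (starRingEnd ℂ) (stdAddChar (f (dig p (i + τ)))) = 0 := by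
  set S := (range (p ^ m - τ)).filter (fun i => dig p i (π s) = dig p (i + τ) (π s))
  have hmemS : ∀ {i}, i ∈ S ↔ i + τ < p ^ m ∧ dig p i (π s) = dig p (i + τ) (π s) := by
    intro i
    simp only [S, mem_filter, mem_range, Nat.lt_sub_iff_add_lt]
  choose! c hcm hc using fun i (hi : i ∈ S) =>
    exists_agreeUntil hπ hτ (hmemS.1 hi).1 (hmemS.1 hi).2
  have hcIcc : ∀ i ∈ S, π (c i) ∈ Icc s m := fun i hi =>
    hπ _ (mem_Icc.2 ⟨(hc i hi).1, (hcm i hi).le⟩)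
  have hk : ∀ i ∈ S, 1 ≤ π (c i) := fun i hi => hs.trans (mem_Icc.1 (hcIcc i hi)).1
  set σ : ℕ → ℕ := fun i => bumpAt p (π (c i)) i
  have hbump : ∀ i ∈ S,
      IsBump (π (c i)) (dig p i) (dig p (i + τ)) (dig p (σ i)) (dig p (σ i + τ)) := fun i hi =>
    isBump_dig_bumpAt (hk i hi) ((hc i hi).2.1 _ (mem_Icc.2 ⟨(hc i hi).1, le_rfl⟩))
  have hagree : ∀ i ∈ S, AgreeUntil s π (dig p (σ i)) (dig p (σ i + τ)) (c i) := fun i hi =>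
    (hc i hi).of_isBump hs hπ (hcm i hi) (hbump i hi)
  have hσS : ∀ i ∈ S, σ i ∈ S := by
    intro i hi
    refine hmemS.2 ⟨?_, (hagree i hi).2.1 s (mem_Icc.2 ⟨le_rfl, (hc i hi).1⟩)⟩
    rw [← bumpAt_add_right (hk i hi) (hbump i hi).eq_at]
    exact bumpAt_lt_pow (hk i hi) (mem_Icc.1 (hcIcc i hi)).2 (hmemS.1 hi).1
  have hcσ : ∀ i ∈ S, c (σ i) = c i := fun i hi => (hc _ (hσS i hi)).unique (hagree i hi)
  have hinj : Set.InjOn σ S := by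
    intro i hi i' hi' hσ
    have hcc : c i = c i' := by rw [← hcσ i hi, ← hcσ i' hi', hσ]
    simp only [σ, hcc] at hσ
    exact bumpAt_injective (hk i' hi') hσ
  refine sum_eq_zero_of_map_eq_mul (fun i hi => hσS i hi) hinj
    (w := fun i => stdAddChar (dig p i (π (c i + 1)) - dig p (i + τ) (π (c i + 1))))
    (fun i hi => ?_) (fun i hi => ?_) (fun i hi => ?_)
  · have hne : π (c i + 1) ≠ π (c i) := by simp
    have h1 : 1 ≤ π (c i + 1) :=
      one_le_of_mapsTo_Icc hs hπ (mem_Icc.2 ⟨by have := (hc i hi).1; omega, hcm i hi⟩)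
    simp only [hcσ i hi, (hbump i hi).fst_of_ne _ h1 hne, (hbump i hi).snd_of_ne _ h1 hne]
  · rw [Ne, ← AddChar.map_zero_eq_one (stdAddChar (N := p)), injective_stdAddChar.eq_iff,
      sub_eq_zero]
    exact (hc i hi).2.2
  · exact stdAddChar_mul_conj_of_isBump hs hpl hπ hdep hf
      (mem_Ico.2 ⟨(hc i hi).1, hcm i hi⟩) (hbump i hi) fun l hl =>
        (hc i hi).2.1 l (mem_Icc.2 ⟨(mem_Ico.1 hl).1, (mem_Ico.1 hl).2.le⟩)

end Phase

theorem stmt1_general (p m s lam : ℕ) (hs : 1 ≤ s)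
    (hlam : 0 < lam) (hpl : p ∣ lam)
    (π : Equiv.Perm ℕ) (hπ : ∀ i ∈ Finset.Icc s m, π i ∈ Finset.Icc s m)
    (g : ℕ → ZMod lam) (g₀ : ZMod lam)
    (h : (ℕ → ZMod p) → ZMod lam)
    (hdep : ∀ u w : ℕ → ZMod p, (∀ t, 1 ≤ t → t ≤ s - 1 → u t = w t) → h u = h w)
    (f : (ℕ → ZMod p) → ZMod lam)
    (hf : ∀ v : ℕ → ZMod p,
      f v = ((lam / p : ℕ) : ZMod lam) *
            (∑ i ∈ Finset.Ico s m, ((v (π i)).val : ZMod lam) * ((v (π (i + 1))).val : ZMod lam))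
        + ∑ i ∈ Finset.Icc 1 m, g i * ((v i).val : ZMod lam) + g₀ + h v)
    (a : ZMod p → (ℕ → ZMod p) → ZMod lam)
    (ha : ∀ (γ : ZMod p) (v : ℕ → ZMod p),
      a γ v = f v + ((lam / p : ℕ) : ZMod lam) * ((v (π s)).val : ZMod lam) * (γ.val : ZMod lam))
    (τ : ℕ) (hτ1 : p ^ (s - 1) < τ) :
    ∑ γ ∈ Finset.range p,
      aacf (p ^ m) (fun i => eZMod lam (a (γ : ZMod p) (dig p i))) τ = 0 := by
  have : NeZero lam := ⟨hlam.ne'⟩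
  have : NeZero p := ⟨by rintro rfl; exact hlam.ne' (zero_dvd_iff.1 hpl)⟩
  simp only [aacf, eZMod_eq_stdAddChar]
  rw [sum_comm, sum_congr rfl fun i _ => sum_range_stdAddChar_mul_conj hpl ha _ _, ← sum_filter,
    ← mul_sum, sum_filter_stdAddChar_mul_conj_eq_zero hs hpl hπ hdep hf hτ1, mul_zero]

theorem stmt1 (p m s lam : ℕ) (hp : p.Prime) (hm : 1 ≤ m) (hs : 1 ≤ s) (hsm : s ≤ m)
    (hlam : 0 < lam) (hpl : p ∣ lam)
    (π : Equiv.Perm ℕ) (hπ : ∀ i ∈ Finset.Icc s m, π i ∈ Finset.Icc s m)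
    (g : ℕ → ZMod lam) (g₀ : ZMod lam)
    (h : (ℕ → ZMod p) → ZMod lam)
    (hdep : ∀ u w : ℕ → ZMod p, (∀ t, 1 ≤ t → t ≤ s - 1 → u t = w t) → h u = h w)
    (hs1 : s = 1 → ∀ u, h u = 0)
    (f : (ℕ → ZMod p) → ZMod lam)
    (hf : ∀ v : ℕ → ZMod p,
      f v = ((lam / p : ℕ) : ZMod lam) *
            (∑ i ∈ Finset.Ico s m, ((v (π i)).val : ZMod lam) * ((v (π (i + 1))).val : ZMod lam))
        + ∑ i ∈ Finset.Icc 1 m, g i * ((v i).val : ZMod lam) + g₀ + h v)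
    (a : ZMod p → (ℕ → ZMod p) → ZMod lam)
    (ha : ∀ (γ : ZMod p) (v : ℕ → ZMod p),
      a γ v = f v + ((lam / p : ℕ) : ZMod lam) * ((v (π s)).val : ZMod lam) * (γ.val : ZMod lam))
    (τ : ℕ) (hτ1 : p ^ (s - 1) < τ) (hτL : τ < p ^ m) :
    ∑ γ ∈ Finset.range p,
      aacf (p ^ m) (fun i => eZMod lam (a (γ : ZMod p) (dig p i))) τ = 0 :=
  stmt1_general p m s lam hs hlam hpl π hπ g g₀ h hdep f hf a ha τ hτ1
end

section
/- Let {a_0, …, a_{M−1}} be complex-valued sequences of length L with unimodular entries (|a_{i,k}| = 1 for all i, k) forming an (M, L, S)-multiple shift complementary set, i.e. Σ_{i=0}^{M−1} ρ(a_i)(τ) = 0 for every τ with 0 < τ < L and S ∣ τ. Let ζ = exp(2π√−1/S). Then for every complex number z with |z| = 1, Σ_{i=0}^{M−1} Σ_{u=0}^{S−1} |Σ_{k=0}^{L−1} a_{i,k} · ζ^{k·u} · z^k|² = M·L·S. -/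
/-! For `‖w‖ = 1`, expanding `‖∑ₖ aₖ wᵏ‖²` and grouping the terms `aₖ conj(aₗ) wᵏ conj(w)ˡ` by the
shift `τ = |k - l|` gives `ρ(a)(0) + ∑_{0<τ<L} (ρ(a)(τ) conj(w)^τ + conj(ρ(a)(τ)) w^τ)`. Put
`w = ζᵘ z` and sum over `u < S`: the character sum `∑ᵤ (ζᵘ z)^τ` vanishes unless `S ∣ τ`, and for
`S ∣ τ` the complementary-set condition kills `∑ᵢ ρ(aᵢ)(τ)`. Only the `τ = 0` terms survive, and
`ρ(aᵢ)(0) = L` because the entries are unimodular. -/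

open Finset

open ComplexConjugate

theorem sum_range_sum_Ico_eq_sum_Ico_sum_range_add {R : Type*} [AddCommMonoid R] (L : ℕ)
    (f : ℕ → ℕ → R) :
    ∑ k ∈ range L, ∑ l ∈ Ico (k + 1) L, f k l
      = ∑ τ ∈ Ico 1 L, ∑ k ∈ range (L - τ), f k (k + τ) := by
  symm
  rw [sum_comm' (t' := range L) (s' := fun k => Ico 1 (L - k))
    (fun τ k => by simp only [mem_Ico, mem_range]; omega)]
  refine sum_congr rfl fun k hk => ?_
  rw [sum_Ico_add (f k), add_comm 1, Nat.sub_add_cancel (mem_range.mp hk).le]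

theorem sum_range_sum_range_eq_sum_diag_add_sum_shift {R : Type*} [AddCommMonoid R] (L : ℕ)
    (f : ℕ → ℕ → R) :
    ∑ k ∈ range L, ∑ l ∈ range L, f k l
      = ∑ k ∈ range L, f k k
        + ∑ τ ∈ Ico 1 L, ∑ k ∈ range (L - τ), (f k (k + τ) + f (k + τ) k) := by
  have hsplit : ∀ k ∈ range L, ∑ l ∈ range L, f k l
      = f k k + ∑ l ∈ Ico (k + 1) L, f k l + ∑ l ∈ range k, f k l := by
    intro k hk
    rw [← sum_range_add_sum_Ico _ (mem_range.mp hk), sum_range_succ]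
    abel
  have hlower : ∑ k ∈ range L, ∑ l ∈ range k, f k l
      = ∑ l ∈ range L, ∑ k ∈ Ico (l + 1) L, f k l :=
    sum_comm' fun k l => by simp only [mem_Ico, mem_range]; omega
  rw [sum_congr rfl hsplit, sum_add_distrib, sum_add_distrib, hlower,
    sum_range_sum_Ico_eq_sum_Ico_sum_range_add, sum_range_sum_Ico_eq_sum_Ico_sum_range_add,
    add_assoc, ← sum_add_distrib]
  simp only [sum_add_distrib]

theorem aacf_zero_of_norm_eq_one {L : ℕ} {a : ℕ → ℂ} (ha : ∀ k < L, ‖a k‖ = 1) :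
    aacf L a 0 = L := by
  rw [aacf, Nat.sub_zero]
  trans ∑ _k ∈ range L, (1 : ℂ)
  · refine sum_congr rfl fun k hk => ?_
    rw [add_zero, Complex.mul_conj', ha k (mem_range.mp hk)]
    norm_num
  · simp

theorem sq_norm_sum_mul_pow_eq_aacf (L : ℕ) (a : ℕ → ℂ) {w : ℂ} (hw : ‖w‖ = 1) :
    (‖∑ k ∈ range L, a k * w ^ k‖ : ℂ) ^ 2
      = aacf L a 0 + ∑ τ ∈ Ico 1 L, (aacf L a τ * conj w ^ τ + conj (aacf L a τ) * w ^ τ) := by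
  have hw' : ∀ k : ℕ, (w * conj w) ^ k = 1 := by
    simp [Complex.mul_conj', hw]
  rw [← Complex.mul_conj', map_sum, sum_mul_sum, sum_range_sum_range_eq_sum_diag_add_sum_shift]
  congr 1
  · rw [aacf]
    refine sum_congr rfl fun k _ => ?_
    simp only [map_mul, map_pow]
    linear_combination (a k * conj (a (k + 0))) * hw' k
  · refine sum_congr rfl fun τ _ => ?_
    simp only [aacf, map_sum, sum_mul, ← sum_add_distrib, map_mul, map_pow, Complex.conj_conj]
    refine sum_congr rfl fun k _ => ?_
    linear_combination (a k * conj (a (k + τ)) * conj w ^ τ + a (k + τ) * conj (a k) * w ^ τ) * hw' k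

theorem IsPrimitiveRoot.sum_mul_pow_eq_zero {K : Type*} [Field K] {ζ : K} {S τ : ℕ}
    (hζ : IsPrimitiveRoot ζ S) (hτ : ¬ S ∣ τ) (z : K) :
    ∑ u ∈ range S, (ζ ^ u * z) ^ τ = 0 := by
  have hne : ζ ^ τ ≠ 1 := fun h => hτ ((hζ.pow_eq_one_iff_dvd τ).mp h)
  have hpow : (ζ ^ τ) ^ S = 1 := by rw [← pow_mul, mul_comm, pow_mul, hζ.pow_eq_one, one_pow]
  simp_rw [mul_pow, ← pow_mul, mul_comm _ τ, pow_mul, ← sum_mul, geom_sum_eq hne, hpow]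
  simp

theorem stmt7_general (M L S : ℕ) (hS : 0 < S)
    (a : ℕ → ℕ → ℂ)
    (hunit : ∀ i < M, ∀ k < L, ‖a i k‖ = 1)
    (hmscs : ∀ τ, 0 < τ → τ < L → S ∣ τ →
      ∑ i ∈ Finset.range M, aacf L (a i) τ = 0)
    (ζ : ℂ) (hζ : ζ = Complex.exp (2 * (Real.pi : ℂ) * Complex.I / (S : ℂ)))
    (z : ℂ) (hz : ‖z‖ = 1) :
    ∑ i ∈ Finset.range M, ∑ u ∈ Finset.range S,
      ‖∑ k ∈ Finset.range L, a i k * ζ ^ (k * u) * z ^ k‖ ^ 2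
      = (M : ℝ) * L * S := by
  have hζS : IsPrimitiveRoot ζ S := hζ ▸ Complex.isPrimitiveRoot_exp S hS.ne'
  have hw : ∀ u : ℕ, ‖ζ ^ u * z‖ = 1 := by simp [hζS.norm'_eq_one hS.ne', hz]
  have hshift : ∀ τ ∈ Ico 1 L, ∑ i ∈ range M, ∑ u ∈ range S,
      (aacf L (a i) τ * conj (ζ ^ u * z) ^ τ + conj (aacf L (a i) τ) * (ζ ^ u * z) ^ τ) = 0 := by
    intro τ hτ
    simp only [sum_add_distrib, ← mul_sum, ← sum_mul, ← map_sum, ← map_pow]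
    by_cases hdvd : S ∣ τ
    · obtain ⟨hτ0, hτL⟩ := mem_Ico.mp hτ
      simp [hmscs τ hτ0 hτL hdvd]
    · simp [hζS.sum_mul_pow_eq_zero hdvd z]
  have hrow : ∀ i ∈ range M, ∑ u ∈ range S,
      (‖∑ k ∈ range L, a i k * ζ ^ (k * u) * z ^ k‖ : ℂ) ^ 2
        = S * L + ∑ τ ∈ Ico 1 L, ∑ u ∈ range S,
          (aacf L (a i) τ * conj (ζ ^ u * z) ^ τ + conj (aacf L (a i) τ) * (ζ ^ u * z) ^ τ) := by
    intro i hi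
    have hpow : ∀ u k : ℕ, a i k * ζ ^ (k * u) * z ^ k = a i k * (ζ ^ u * z) ^ k := by
      intro u k; ring
    simp only [hpow, sq_norm_sum_mul_pow_eq_aacf L _ (hw _),
      aacf_zero_of_norm_eq_one (hunit i (mem_range.mp hi))]
    rw [sum_add_distrib, sum_const, card_range, nsmul_eq_mul, sum_comm]
  apply Complex.ofReal_injective
  push_cast
  rw [sum_congr rfl hrow, sum_add_distrib, sum_comm, sum_eq_zero hshift]
  simp only [sum_const, card_range, nsmul_eq_mul]
  ring

theorem stmt7 (M L S : ℕ) (hM : 0 < M) (hL : 0 < L) (hS : 0 < S)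
    (a : ℕ → ℕ → ℂ)
    (hunit : ∀ i < M, ∀ k < L, ‖a i k‖ = 1)
    (hmscs : ∀ τ, 0 < τ → τ < L → S ∣ τ →
      ∑ i ∈ Finset.range M, aacf L (a i) τ = 0)
    (ζ : ℂ) (hζ : ζ = Complex.exp (2 * (Real.pi : ℂ) * Complex.I / (S : ℂ)))
    (z : ℂ) (hz : ‖z‖ = 1) :
    ∑ i ∈ Finset.range M, ∑ u ∈ Finset.range S,
      ‖∑ k ∈ Finset.range L, a i k * ζ ^ (k * u) * z ^ k‖ ^ 2
      = (M : ℝ) * L * S :=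
  stmt7_general M L S hS a hunit hmscs ζ hζ z hz
end
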